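/- arXiv:0710.4492 — 2 statements merged into one kernel-verified Lean document; each statement's English description precedes it below -/
import Mathlib

section
/- Let g be a 4-dimensional complex Lie algebra spanned by Y, Z, T, X' with brackets [Y,Z] = Z, [Y,T] = -T, [T,Z] = aX', [T,X'] = cT, [Y,X'] = 0 and [Z,X'] = 0. If the derived algebra of g is nilpotent, then ac = 0. -/
/-- Let `g` be a 4-dimensional complex Lie algebra with basis `{Y, Z, T, X'}` and brackets
`⁅Y,Z⁆ = Z`, `⁅Y,T⁆ = -T`, `⁅T,Z⁆ = a • X'`, `⁅T,X'⁆ = c • T`, `⁅Y,X'⁆ = 0`, `⁅Z,X'⁆ = 0`.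
If the derived algebra of `g` is nilpotent, then `a * c = 0`. -/
theorem nilpotent_derived_implies_ac_zero
    {g : Type*} [LieRing g] [LieAlgebra ℂ g]
    (b : Module.Basis (Fin 4) ℂ g) (a c : ℂ)
    -- `Y = b 0`, `Z = b 1`, `T = b 2`, `X' = b 3`
    (hYZ : ⁅b 0, b 1⁆ = b 1)
    (hYT : ⁅b 0, b 2⁆ = -(b 2))
    (hTZ : ⁅b 2, b 1⁆ = a • b 3)
    (hTX : ⁅b 2, b 3⁆ = c • b 2)
    (hYX : ⁅b 0, b 3⁆ = 0)
    (hZX : ⁅b 1, b 3⁆ = 0)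
    (hnilp : LieModule.IsNilpotent (LieAlgebra.derivedSeries ℂ g 1) (LieAlgebra.derivedSeries ℂ g 1)) :
    a * c = 0 := by
  by_cases ha : a = 0
  · simp [ha]
  set D := LieAlgebra.derivedSeries ℂ g 1 with hD
  -- T = b 2 ∈ D
  have hTmem : b 2 ∈ D := by
    have h : ⁅b 0, b 2⁆ ∈ D := by
      rw [hD]
      simp only [LieAlgebra.derivedSeries_def, LieAlgebra.derivedSeriesOfIdeal_succ,
        LieAlgebra.derivedSeriesOfIdeal_zero]
      exact LieSubmodule.lie_mem_lie trivial trivial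
    rw [hYT] at h
    simpa using neg_mem h
  -- X' = b 3 ∈ D (since a ≠ 0)
  have hXmem : b 3 ∈ D := by
    have h : ⁅b 2, b 1⁆ ∈ D := by
      rw [hD]
      simp only [LieAlgebra.derivedSeries_def, LieAlgebra.derivedSeriesOfIdeal_succ,
        LieAlgebra.derivedSeriesOfIdeal_zero]
      exact LieSubmodule.lie_mem_lie trivial trivial
    rw [hTZ] at h
    have := D.smul_mem a⁻¹ h
    rwa [smul_smul, inv_mul_cancel₀ ha, one_smul] at this
  set x : D := ⟨b 3, hXmem⟩ with hx
  set t : D := ⟨b 2, hTmem⟩ with ht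
  have hbr : ⁅x, t⁆ = (-c) • t := by
    apply Subtype.ext
    show (⁅b 3, b 2⁆ : g) = _
    rw [← lie_skew, hTX]
    simp [ht]
  haveI := hnilp
  obtain ⟨k, hk⟩ := LieAlgebra.nilpotent_ad_of_nilpotent_algebra ℂ D
  have hpow : ∀ n : ℕ, ((LieAlgebra.ad ℂ D x) ^ n) t = ((-c) ^ n) • t := by
    intro n
    induction n with
    | zero => simp
    | succ n ih =>
      rw [pow_succ', pow_succ']
      simp only [LinearMap.comp_apply, Module.End.mul_apply, ih, map_smul,
        LieAlgebra.ad_apply, hbr, smul_smul, mul_comm]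
  have h0 : ((-c) ^ k) • t = 0 := by
    rw [← hpow k, hk x]
    simp
  have h0' : ((-c) ^ k) • (b 2) = (0 : g) := congrArg Subtype.val h0
  have : ((-c) ^ k) = 0 := by
    have := b.linearIndependent
    by_contra hne
    have : b 2 = 0 := by
      have := congrArg (fun v => ((-c) ^ k)⁻¹ • v) h0'
      simpa [smul_smul, inv_mul_cancel₀ hne] using this
    exact b.ne_zero 2 this
  have hc : c = 0 := by
    have h := pow_eq_zero_iff' (M₀ := ℂ) |>.mp this |>.1
    exact neg_eq_zero.mp h
  simp [hc]
end

section
/- If an element of SL(3,ℤ) has all three eigenvalues within distance 1/2 of 1 in ℂ, then all its eigenvalues equal 1 (its characteristic polynomial is (x-1)³). -/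
/-!
Write `xᵢ = lᵢ - 1`. The characteristic polynomial has integer coefficients and constant term
`-det M = -1`, so the elementary symmetric functions `e₁, e₂, e₃` of the `xᵢ` are integers, and
`(1 + x₀)(1 + x₁)(1 + x₂) = l₀ l₁ l₂ = 1` says `e₁ + e₂ + e₃ = 0`. Since `|xᵢ| < 1/2` we get
`|e₃| < 1/8` and `|e₂| < 3/4`, so `e₃ = e₂ = 0`, hence `e₁ = 0`. Then every `xᵢ` is a root of
`X³ - e₁ X² + e₂ X - e₃ = X³`, so `xᵢ = 0`.
-/

open Polynomial

lemma Int.eq_zero_of_norm_intCast_lt_one {m : ℤ} (h : ‖(m : ℂ)‖ < 1) : m = 0 := by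
  rw [Complex.norm_intCast] at h
  exact Int.abs_lt_one_iff.mp (by exact_mod_cast h)

lemma Polynomial.X_sub_C_mul_X_sub_C_mul_X_sub_C {R : Type*} [CommRing R] (a b c : R) :
    (X - C a) * (X - C b) * (X - C c) =
      X ^ 3 - C (a + b + c) * X ^ 2 + C (a * b + a * c + b * c) * X - C (a * b * c) := by
  simp only [map_add, map_mul]
  ring

lemma Matrix.esymm_mem_range_of_charpoly_map_eq {R S : Type*} [CommRing R] [CommRing S]
    (f : R →+* S) (M : Matrix (Fin 3) (Fin 3) R) {a b c : S}
    (h : (M.map f).charpoly = (X - C a) * (X - C b) * (X - C c)) :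
    a + b + c ∈ f.range ∧ a * b + a * c + b * c ∈ f.range ∧ a * b * c = f M.det := by
  have hcoeff (k : ℕ) : f (M.charpoly.coeff k) =
      (X ^ 3 - C (a + b + c) * X ^ 2 + C (a * b + a * c + b * c) * X - C (a * b * c)).coeff k := by
    rw [← X_sub_C_mul_X_sub_C_mul_X_sub_C, ← h, Matrix.charpoly_map, coeff_map]
  refine ⟨⟨-M.charpoly.coeff 2, ?_⟩, ⟨M.charpoly.coeff 1, ?_⟩, ?_⟩
  · simpa [coeff_X_pow, coeff_X, -map_add] using congrArg Neg.neg (hcoeff 2)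
  · simpa [coeff_X_pow, coeff_X, -map_add] using hcoeff 1
  · have hc₀ : f (M.charpoly.coeff 0) = -(a * b * c) := by
      simpa [coeff_X_pow, -map_add] using hcoeff 0
    rw [M.det_eq_sign_charpoly_coeff, map_mul, hc₀]
    norm_num

lemma eq_zero_of_esymm_eq_zero {R : Type*} [CommRing R] [IsReduced R] {x y z : R}
    (h₁ : x + y + z = 0) (h₂ : x * y + x * z + y * z = 0) (h₃ : x * y * z = 0) :
    x = 0 ∧ y = 0 ∧ z = 0 := by
  refine ⟨IsReduced.eq_zero x ⟨3, ?_⟩, IsReduced.eq_zero y ⟨3, ?_⟩, IsReduced.eq_zero z ⟨3, ?_⟩⟩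
  · linear_combination x ^ 2 * h₁ - x * h₂ + h₃
  · linear_combination y ^ 2 * h₁ - y * h₂ + h₃
  · linear_combination z ^ 2 * h₁ - z * h₂ + h₃

lemma eq_zero_of_norm_lt_half_of_esymm_eq_intCast {x y z : ℂ}
    (hx : ‖x‖ < 1 / 2) (hy : ‖y‖ < 1 / 2) (hz : ‖z‖ < 1 / 2) {e₁ e₂ e₃ : ℤ}
    (h₁ : x + y + z = e₁) (h₂ : x * y + x * z + y * z = e₂) (h₃ : x * y * z = e₃)
    (hsum : e₁ + e₂ + e₃ = 0) :
    x = 0 ∧ y = 0 ∧ z = 0 := by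
  have hx₀ := norm_nonneg x
  have hy₀ := norm_nonneg y
  have hz₀ := norm_nonneg z
  have he₃ : e₃ = 0 := by
    refine Int.eq_zero_of_norm_intCast_lt_one ?_
    rw [← h₃, norm_mul, norm_mul]
    nlinarith [mul_nonneg hx₀ hy₀]
  have he₂ : e₂ = 0 := by
    refine Int.eq_zero_of_norm_intCast_lt_one ?_
    rw [← h₂]
    calc ‖x * y + x * z + y * z‖ ≤ ‖x‖ * ‖y‖ + ‖x‖ * ‖z‖ + ‖y‖ * ‖z‖ := by
          simpa only [norm_mul] using norm_add₃_le (a := x * y) (b := x * z) (c := y * z)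
      _ < 1 := by nlinarith
  have he₁ : e₁ = 0 := by omega
  exact eq_zero_of_esymm_eq_zero (by simp [h₁, he₁]) (by simp [h₂, he₂]) (by simp [h₃, he₃])

open Polynomial in
/-- If an element of `SL(3,ℤ)` has all three (complex) eigenvalues within distance `1/2` of `1`,
then all its eigenvalues equal `1`, i.e. its characteristic polynomial is `(X - 1)³`. -/
theorem sl3z_eigenvalues_near_one_eq_one
    (M : Matrix (Fin 3) (Fin 3) ℤ)
    (hdet : M.det = 1)
    (l0 l1 l2 : ℂ)
    (hchar : (M.map (Int.cast : ℤ → ℂ)).charpoly = (X - C l0) * (X - C l1) * (X - C l2))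
    (h0 : ‖l0 - 1‖ < 1/2)
    (h1 : ‖l1 - 1‖ < 1/2)
    (h2 : ‖l2 - 1‖ < 1/2) :
    l0 = 1 ∧ l1 = 1 ∧ l2 = 1 := by
  obtain ⟨⟨s₁, hs₁⟩, ⟨s₂, hs₂⟩, hs₃⟩ :=
    Matrix.esymm_mem_range_of_charpoly_map_eq (Int.castRingHom ℂ) M hchar
  simp only [eq_intCast, hdet, Int.cast_one] at hs₁ hs₂ hs₃
  obtain ⟨hl0, hl1, hl2⟩ := eq_zero_of_norm_lt_half_of_esymm_eq_intCast h0 h1 h2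
    (e₁ := s₁ - 3) (e₂ := s₂ - 2 * s₁ + 3) (e₃ := s₁ - s₂)
    (by push_cast; linear_combination -hs₁)
    (by push_cast; linear_combination -hs₂ + 2 * hs₁)
    (by push_cast; linear_combination hs₃ + hs₂ - hs₁)
    (by ring)
  exact ⟨sub_eq_zero.mp hl0, sub_eq_zero.mp hl1, sub_eq_zero.mp hl2⟩
end
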